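/- Let C be a Hadamard full propelinear code of length 4n whose group of permutations Π is cyclic of order 4n, generated by the permutation of a codeword a, so that C = ⟨a, u⟩ ≅ C_{4n} × C₂. Then the binary polynomial a(x) associated to a is divisible by (1+x) in F₂[x]/(x^{4n}−1), and setting g = a(x)/(1+x), the element a^i corresponds to the polynomial (1 + x^i)·g; consequently the matrix with rows x^i·g, 0 ≤ i ≤ 4n−1, is a circulant binary Hadamard matrix. -/

import Mathlib

instance fourMulNeZero (n : ℕ) [NeZero n] : NeZero (4 * n) :=
  ⟨Nat.mul_ne_zero (by norm_num) (NeZero.ne n)⟩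

/-- Cyclic shift by `i` positions: the vector of `x^i · v` in `F₂[x]/(x^m − 1)`. -/
def shift (m : ℕ) (i : ZMod m) (v : ZMod m → ZMod 2) : ZMod m → ZMod 2 :=
  fun t => v (t - i)

/-- The all-ones vector `u`. -/
lemma shift_zero (m : ℕ) (v : ZMod m → ZMod 2) : shift m 0 v = v := by
  funext t; simp [shift]

lemma shift_add (m : ℕ) (i : ZMod m) (v w : ZMod m → ZMod 2) :
    shift m i (v + w) = shift m i v + shift m i w := rfl

lemma shift_shift (m : ℕ) (i j : ZMod m) (v : ZMod m → ZMod 2) :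
    shift m i (shift m j v) = shift m (i + j) v := by
  funext t; simp only [shift]; ring_nf

lemma hammingNorm_shift (m : ℕ) [NeZero m] (i : ZMod m) (v : ZMod m → ZMod 2) :
    hammingNorm (shift m i v) = hammingNorm v := by
  unfold hammingNorm
  apply Finset.card_bij (fun t _ => t - i)
  · intro t ht; simpa [shift] using Finset.mem_filter.mp ht |>.2
  · intro s hs t ht hst; exact by linear_combination (norm := ring_nf) hst
  · intro t ht
    exact ⟨t + i, Finset.mem_filter.mpr ⟨Finset.mem_univ _, by
      simpa [shift] using Finset.mem_filter.mp ht |>.2⟩, by ring⟩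

lemma dist_eq_norm_add (m : ℕ) [NeZero m] (f h : ZMod m → ZMod 2) :
    hammingDist f h = hammingNorm (f + h) := by
  rw [hammingDist_eq_hammingNorm]
  congr 1
  funext t
  simp [sub_eq_add_neg, CharTwo.neg_eq]

lemma sum_zero_of_even_norm (m : ℕ) [NeZero m] (a : ZMod m → ZMod 2) {n : ℕ}
    (hwt : hammingNorm a = 2 * n) : ∑ t, a t = 0 := by
  have h1 : ∀ x : ZMod 2, x ≠ 0 → x = 1 := by decide
  have : ∑ t, a t = ∑ t ∈ Finset.univ.filter (fun t => a t ≠ 0), a t := by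
    rw [Finset.sum_filter_ne_zero]
  rw [this, Finset.sum_congr rfl (fun t ht => h1 _ (Finset.mem_filter.mp ht).2)]
  rw [Finset.sum_const, nsmul_eq_mul, mul_one]
  have : (Finset.univ.filter (fun t => a t ≠ 0)).card = 2 * n := hwt
  rw [this]
  push_cast
  simp [ZMod.natCast_self]
  left
  decide

lemma sum_range_eq_sum_univ (m : ℕ) [NeZero m] (a : ZMod m → ZMod 2) :
    ∑ k ∈ Finset.range m, a (k : ZMod m) = ∑ t : ZMod m, a t := by
  refine Finset.sum_nbij' (fun k => (k : ZMod m)) (fun t => t.val) ?_ ?_ ?_ ?_ ?_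
  · intro k _; exact Finset.mem_univ _
  · intro t _; exact Finset.mem_range.mpr (ZMod.val_lt t)
  · intro k hk; exact ZMod.val_cast_of_lt (Finset.mem_range.mp hk)
  · intro t _; rw [ZMod.natCast_val, ZMod.cast_id]
  · intro k _; rfl

lemma self_natCast_val (m : ℕ) [NeZero m] (t : ZMod m) : ((t.val : ℕ) : ZMod m) = t := by
  rw [ZMod.natCast_val, ZMod.cast_id]

lemma val_sub_one (m : ℕ) [NeZero m] (t : ZMod m) (ht : t ≠ 0) :
    (t - 1).val = t.val - 1 := by
  have hpos : 0 < t.val := Nat.pos_of_ne_zero (fun h => ht ((ZMod.val_eq_zero t).mp h))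
  have h1 : t - 1 = ((t.val - 1 : ℕ) : ZMod m) := by
    rw [Nat.cast_sub hpos, self_natCast_val, Nat.cast_one]
  rw [h1, ZMod.val_cast_of_lt (by have := ZMod.val_lt t; omega)]

lemma neg_one_val (m : ℕ) [NeZero m] : (-1 : ZMod m).val = m - 1 := by
  have hpos : 0 < m := Nat.pos_of_ne_zero (NeZero.ne m)
  have h1 : (-1 : ZMod m) = ((m - 1 : ℕ) : ZMod m) := by
    rw [Nat.cast_sub hpos, ZMod.natCast_self, Nat.cast_one, zero_sub]
  rw [h1, ZMod.val_cast_of_lt (by omega)]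
def allOne (m : ℕ) : ZMod m → ZMod 2 := fun _ => 1

/-- `g` is the binary generator polynomial of a circulant Hadamard matrix of order `4n`:
the binary rows `x^i·g` are pairwise at Hamming distance `2n`. -/
def IsCircHadGen (n : ℕ) [NeZero n] (g : ZMod (4 * n) → ZMod 2) : Prop :=
  ∀ i j : ZMod (4 * n), i ≠ j →
    hammingDist (shift (4 * n) i g) (shift (4 * n) j g) = 2 * n

/-- The kernel `K(C) = {x : x + C = C}` of a binary code. -/
def kernelOf {V : Type} [Add V] (C : Set V) : Set V :=
  {x | (fun v => x + v) '' C = C}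

/-- let `C = ⟨a, u⟩` be an HFP-code of length `4n` of type
`C_{4n} × C₂` whose permutation group is cyclic of order `4n` generated by the
cyclic shift `π_a` (shift by one position), so that the powers of `a` are
`a^i = ∑_{k<i} π_a^k(a)`.  Then the polynomial `a(x)` is divisible by `1 + x`,
say `a = (1+x)·g`, the power `a^i` corresponds to the polynomial `(1+x^i)·g`,
and the matrix with rows `x^i·g` is a circulant binary Hadamard matrix. -/
theorem hfp_cyclic_gives_circulant (n : ℕ) [NeZero n]
    (a : ZMod (4 * n) → ZMod 2)
    (p : ℕ → ZMod (4 * n) → ZMod 2)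
    (hp : ∀ i, p i = ∑ k ∈ Finset.range i, shift (4 * n) (k : ZMod (4 * n)) a)
    -- the weight of a is 2n
    (hwt : hammingNorm a = 2 * n)
    -- C = {a^i} ∪ {a^i + u} is a Hadamard code: non-complementary distinct
    -- codewords are at distance 2n
    (hdist : ∀ i j, i < 4 * n → j < 4 * n → p i ≠ p j → p i ≠ p j + allOne (4 * n) →
      hammingDist (p i) (p j) = 2 * n)
    -- a has order 4n : the powers a^0, …, a^{4n−1} are pairwise distinct
    (hord : ∀ i j, i < 4 * n → j < i → p i ≠ p j)
    -- u ∉ ⟨a⟩, so that C = ⟨a⟩ × ⟨u⟩ ≅ C_{4n} × C₂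
    (hu : ∀ i, p i ≠ allOne (4 * n)) :
    ∃ g : ZMod (4 * n) → ZMod 2,
      a = g + shift (4 * n) 1 g ∧
      (∀ i : ℕ, p i = g + shift (4 * n) (i : ZMod (4 * n)) g) ∧
      IsCircHadGen n g := by

  have hsum : ∑ t, a t = 0 := sum_zero_of_even_norm _ a hwt
  set g : ZMod (4 * n) → ZMod 2 := fun t => ∑ k ∈ Finset.range (t.val + 1), a (k : ZMod (4 * n)) with hg
  have hag : a = g + shift (4 * n) 1 g := by
    funext t
    show a t = g t + g (t - 1)
    by_cases ht : t = 0
    · subst ht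
      have h0 : g 0 = a 0 := by
        simp [hg, ZMod.val_zero]
      have h1 : g (0 - 1) = 0 := by
        rw [zero_sub, hg]
        simp only
        rw [neg_one_val]
        have h4 : 4 * n - 1 + 1 = 4 * n := by
          have := NeZero.ne (4 * n); omega
        rw [h4, sum_range_eq_sum_univ, hsum]
      rw [h0, h1, add_zero]
    · have hpos : 0 < t.val := Nat.pos_of_ne_zero (fun h => ht ((ZMod.val_eq_zero t).mp h))
      have h2 : g (t - 1) = ∑ k ∈ Finset.range t.val, a (k : ZMod (4 * n)) := by
        rw [hg]; simp only
        rw [val_sub_one _ t ht]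
        have hnat : t.val - 1 + 1 = t.val := by omega
        rw [hnat]
      have h3 : g t = g (t - 1) + a t := by
        rw [h2, hg]
        simp only
        rw [Finset.sum_range_succ, self_natCast_val]
      rw [h3, add_comm (g (t-1)) (a t), add_assoc, CharTwo.add_self_eq_zero, add_zero]
  have hP : ∀ i : ℕ, p i = g + shift (4 * n) (i : ZMod (4 * n)) g := by
    intro i
    induction i with
    | zero =>
        rw [hp]
        simp [shift_zero, CharTwo.add_self_eq_zero]
    | succ i ih =>
        have hstep : p (i + 1) = p i + shift (4 * n) (i : ZMod (4 * n)) a := by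
          rw [hp, hp, Finset.sum_range_succ]
        rw [hstep, ih, hag, shift_add, shift_shift]
        push_cast
        funext t
        simp only [Pi.add_apply]
        linear_combination CharTwo.add_self_eq_zero (shift (4 * n) (↑i) g t)
  refine ⟨g, hag, hP, ?_⟩
  intro i j hij
  set d : ZMod (4 * n) := j - i with hd
  have hdne : d ≠ 0 := sub_ne_zero.mpr (Ne.symm hij)
  have hdvpos : 0 < d.val := Nat.pos_of_ne_zero (fun h => hdne ((ZMod.val_eq_zero d).mp h))
  have hdvlt : d.val < 4 * n := ZMod.val_lt d
  have key : shift (4 * n) i g + shift (4 * n) j g = shift (4 * n) i (p d.val) := by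
    rw [hP d.val, self_natCast_val, shift_add, shift_shift, hd]
    congr 2
    ring
  have hnorm : hammingDist (shift (4 * n) i g) (shift (4 * n) j g) = hammingNorm (p d.val) := by
    rw [dist_eq_norm_add, key, hammingNorm_shift]
  rw [hnorm]
  have hp0 : p 0 = 0 := by rw [hp]; simp
  have hne1 : p d.val ≠ p 0 := hord d.val 0 hdvlt hdvpos
  have hne2 : p d.val ≠ p 0 + allOne (4 * n) := by
    rw [hp0, zero_add]
    exact hu d.val
  have := hdist d.val 0 hdvlt (Nat.pos_of_ne_zero (NeZero.ne _)) hne1 hne2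
  rw [hp0, hammingDist_zero_right] at this
  exact this
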